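/- Fix n ≥ 1, select kernels σ_0, σ_1, ..., σ_{n−1}, and extend them to a strategy σ by setting σ_j(u, x) = σ_{n−1}(x) for all j > n−1, u ∈ S^{j−n+1} and x ∈ S^{n−1} (i.e. the predictive at any later time depends only on the last n−1 observations, through σ_{n−1}). If, under P_σ, (X_2, ..., X_n) has the same distribution as (X_1, ..., X_{n−1}), then the coordinate process X is stationary under P_σ. -/

import Mathlib

open MeasureTheory ProbabilityTheory

namespace PredictiveBayes

variable {S : Type*} [MeasurableSpace S]

/-- The finite-dimensional distributions determined by a strategy `κ`. -/
noncomputable def stratFDD (κ : ∀ n, Kernel (Fin n → S) S) : ∀ n, Measure (Fin n → S)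
  | 0 => Measure.dirac (fun i : Fin 0 => i.elim0)
  | n + 1 => (stratFDD κ n).bind (fun x => ((κ n) x).map (Fin.snoc x))

/-- `P` is the Ionescu–Tulcea law `P_κ` of the strategy `κ`. -/
def IsStrategyLaw (κ : ∀ n, Kernel (Fin n → S) S) (P : Measure (ℕ → S)) : Prop :=
  ∀ n, P.map (fun ω (i : Fin n) => ω i) = stratFDD κ n

/-- The process `Y` is stationary under `P`. -/
def Stationary {Ω : Type*} [MeasurableSpace Ω] (P : Measure Ω) (Y : ℕ → Ω → S) : Prop :=
  ∀ n : ℕ, P.map (fun ω (i : Fin n) => Y ((i : ℕ) + 1) ω)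
    = P.map (fun ω (i : Fin n) => Y i ω)

/-!
Under `P` the shifted vector `(X₂, …, X_{k+1})` has law `(stratFDD κ (k + 1)).map Fin.tail`.
For `k ≥ n - 1` the predictive `κ (k + 1)` only sees the last `n - 1` coordinates, so
`κ (k + 1) x = κ k (Fin.tail x)`, and therefore the shifted laws obey the same recursion
`stratFDD κ (k + 1) = snocKernel (κ k) ∘ₘ stratFDD κ k` as the unshifted ones. The hypothesis
starts the induction at length `n - 1`; shorter lengths follow by projection.
-/

theorem _root_.Fin.tail_snoc {β : Type*} {k : ℕ} (x : Fin (k + 1) → β) (y : β) :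
    Fin.tail (Fin.snoc x y : Fin (k + 2) → β) = Fin.snoc (Fin.tail x) y := by
  conv_lhs => rw [← Fin.cons_self_tail x, ← Fin.cons_snoc_eq_snoc_cons, Fin.tail_cons]

theorem measurable_snoc {k : ℕ} :
    Measurable (fun p : (Fin k → S) × S => (Fin.snoc p.1 p.2 : Fin (k + 1) → S)) := by
  refine measurable_pi_lambda _ fun i => ?_
  induction i using Fin.lastCases with
  | last => simp only [Fin.snoc_last]; fun_prop
  | cast j => simp only [Fin.snoc_castSucc]; fun_prop

theorem measurable_tail {k : ℕ} : Measurable (Fin.tail : (Fin (k + 1) → S) → Fin k → S) :=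
  measurable_pi_lambda _ fun i => measurable_pi_apply i.succ

theorem _root_.MeasureTheory.Measure.map_comp_eq_comp_map {α β α' β' : Type*}
    [MeasurableSpace α] [MeasurableSpace β] [MeasurableSpace α'] [MeasurableSpace β']
    (μ : Measure α) (K : Kernel α α') (L : Kernel β β') {f : α → β} {g : α' → β'}
    (hf : Measurable f) (hg : Measurable g) (h : ∀ a, (K a).map g = L (f a)) :
    (K ∘ₘ μ).map g = L ∘ₘ μ.map f := by
  have hK : K.map g = L.comap f hf := by ext1 a; rw [Kernel.map_apply _ hg, h, Kernel.comap_apply]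
  rw [Measure.map_comp _ _ hg, hK, ← Kernel.comp_deterministic_eq_comap, ← Measure.comp_assoc,
    Measure.deterministic_comp_eq_map]

noncomputable def snocKernel {k : ℕ} (η : Kernel (Fin k → S) S) :
    Kernel (Fin k → S) (Fin (k + 1) → S) :=
  (Kernel.id ×ₖ η).map fun p => Fin.snoc p.1 p.2

theorem snocKernel_apply {k : ℕ} (η : Kernel (Fin k → S) S) [IsSFiniteKernel η] (x : Fin k → S) :
    snocKernel η x = (η x).map (Fin.snoc x) := by
  rw [snocKernel, Kernel.map_apply _ measurable_snoc, Kernel.prod_apply, Kernel.id_apply,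
    Measure.dirac_prod, Measure.map_map measurable_snoc measurable_prodMk_left]
  rfl

theorem stratFDD_succ (κ : ∀ n, Kernel (Fin n → S) S) [∀ n, IsSFiniteKernel (κ n)] (k : ℕ) :
    stratFDD κ (k + 1) = snocKernel (κ k) ∘ₘ stratFDD κ k := by
  rw [stratFDD]
  congr 1
  funext x
  rw [snocKernel_apply]

theorem map_tail_snocKernel {k : ℕ} (η : Kernel (Fin (k + 1) → S) S) (η' : Kernel (Fin k → S) S)
    [IsSFiniteKernel η] [IsSFiniteKernel η'] (x : Fin (k + 1) → S) (hx : η x = η' (Fin.tail x)) :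
    (snocKernel η x).map Fin.tail = snocKernel η' (Fin.tail x) := by
  have hsnoc : Measurable fun y : S => (Fin.snoc x y : Fin (k + 2) → S) :=
    measurable_snoc.comp measurable_prodMk_left
  rw [snocKernel_apply, snocKernel_apply, Measure.map_map measurable_tail hsnoc, hx]
  congr 1
  funext y
  exact Fin.tail_snoc x y

theorem map_tail_stratFDD_succ (κ : ∀ n, Kernel (Fin n → S) S) [∀ n, IsSFiniteKernel (κ n)]
    (k : ℕ) (hκ : ∀ x : Fin (k + 1) → S, κ (k + 1) x = κ k (Fin.tail x)) :
    (stratFDD κ (k + 2)).map Fin.tail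
      = snocKernel (κ k) ∘ₘ (stratFDD κ (k + 1)).map Fin.tail := by
  rw [stratFDD_succ κ (k + 1)]
  exact Measure.map_comp_eq_comp_map _ _ _ measurable_tail measurable_tail
    fun x => map_tail_snocKernel _ _ x (hκ x)

theorem kernel_succ_apply_eq_apply_tail {κ : ∀ n, Kernel (Fin n → S) S} {m : ℕ}
    (hext : ∀ (j : ℕ) (hj : m < j) (w : Fin j → S),
      κ j w = κ m (fun i : Fin m => w ⟨j - m + (i : ℕ), by have := i.isLt; omega⟩))
    {k : ℕ} (hk : m ≤ k) (x : Fin (k + 1) → S) :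
    κ (k + 1) x = κ k (Fin.tail x) := by
  have hlast : ∀ j (hj : m ≤ j) (w : Fin j → S),
      κ j w = κ m (fun i : Fin m => w ⟨j - m + (i : ℕ), by have := i.isLt; omega⟩) := by
    intro j hj w
    rcases hj.lt_or_eq with hj | rfl
    · exact hext j hj w
    · simp
  rw [hlast (k + 1) (by omega), hlast k hk]
  congr 1
  funext i
  simp only [Fin.tail]
  congr 1
  ext
  simp only [Fin.val_succ]
  omega

theorem IsStrategyLaw.map_shift {κ : ∀ n, Kernel (Fin n → S) S} {P : Measure (ℕ → S)}
    (hP : IsStrategyLaw κ P) (k : ℕ) :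
    P.map (fun ω (i : Fin k) => ω ((i : ℕ) + 1)) = (stratFDD κ (k + 1)).map Fin.tail := by
  have hproj : Measurable fun ω : ℕ → S => fun i : Fin (k + 1) => ω i :=
    measurable_pi_lambda _ fun i => measurable_pi_apply _
  rw [← hP (k + 1), Measure.map_map measurable_tail hproj]
  rfl

theorem IsStrategyLaw.map_shift_eq_stratFDD {κ : ∀ n, Kernel (Fin n → S) S}
    [∀ n, IsSFiniteKernel (κ n)] {P : Measure (ℕ → S)} (hP : IsStrategyLaw κ P) {m : ℕ}
    (hκ : ∀ k, m ≤ k → ∀ x : Fin (k + 1) → S, κ (k + 1) x = κ k (Fin.tail x))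
    (hm : P.map (fun ω (i : Fin m) => ω ((i : ℕ) + 1)) = stratFDD κ m) {k : ℕ} (hk : m ≤ k) :
    P.map (fun ω (i : Fin k) => ω ((i : ℕ) + 1)) = stratFDD κ k := by
  induction k, hk using Nat.le_induction with
  | base => exact hm
  | succ k hk ih =>
    rw [hP.map_shift, map_tail_stratFDD_succ κ k (hκ k hk), ← hP.map_shift, ih, stratFDD_succ]

theorem stationary_of_forall_ge {Ω : Type*} [MeasurableSpace Ω] (P : Measure Ω) (Y : ℕ → Ω → S)
    (hY : ∀ i, Measurable (Y i)) (m : ℕ)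
    (h : ∀ k, m ≤ k → P.map (fun ω (i : Fin k) => Y ((i : ℕ) + 1) ω)
      = P.map (fun ω (i : Fin k) => Y i ω)) :
    Stationary P Y := by
  intro k
  let restrict : (Fin (max k m) → S) → Fin k → S := fun z i => z (Fin.castLE (le_max_left k m) i)
  have hrestrict : Measurable restrict := measurable_pi_lambda _ fun i => measurable_pi_apply _
  calc P.map (fun ω (i : Fin k) => Y ((i : ℕ) + 1) ω)
      = (P.map fun ω (i : Fin (max k m)) => Y ((i : ℕ) + 1) ω).map restrict := by
        rw [Measure.map_map hrestrict (measurable_pi_lambda _ fun i => hY _)]; rfl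
    _ = (P.map fun ω (i : Fin (max k m)) => Y i ω).map restrict := by rw [h _ (le_max_right k m)]
    _ = P.map (fun ω (i : Fin k) => Y i ω) := by
        rw [Measure.map_map hrestrict (measurable_pi_lambda _ fun i => hY _)]; rfl

/-- **Lemma (extension of a finite-dimensional stationary vector).** Fix `n ≥ 1` and a
strategy `κ` such that, for every `j > n - 1`, the predictive `κ_j(u, x)` depends only
on the last `n - 1` observations `x ∈ S^{n-1}`, through `κ_{n-1}`. If, under `P_κ`,
`(X_2, …, X_n)` has the same distribution as `(X_1, …, X_{n-1})`, then the coordinate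
process is stationary under `P_κ`. -/
theorem stationary_extension {S : Type*} [MeasurableSpace S]
    (n : ℕ)
    (κ : ∀ m, Kernel (Fin m → S) S) [∀ m, IsMarkovKernel (κ m)]
    (hext : ∀ (j : ℕ) (hj : n - 1 < j) (w : Fin j → S),
      κ j w = κ (n - 1) (fun i : Fin (n - 1) =>
        w ⟨j - (n - 1) + (i : ℕ), by have := i.isLt; omega⟩))
    (P : Measure (ℕ → S)) (hP : IsStrategyLaw κ P)
    (hshift : P.map (fun ω (i : Fin (n - 1)) => ω ((i : ℕ) + 1))
      = P.map (fun ω (i : Fin (n - 1)) => ω i)) :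
    Stationary P (fun m ω => ω m) := by
  have hκ : ∀ k, n - 1 ≤ k → ∀ x : Fin (k + 1) → S, κ (k + 1) x = κ k (Fin.tail x) :=
    fun k hk => kernel_succ_apply_eq_apply_tail hext hk
  refine stationary_of_forall_ge P _ measurable_pi_apply (n - 1) fun k hk => ?_
  rw [hP.map_shift_eq_stratFDD hκ (by rw [hshift, hP]) hk, hP]

end PredictiveBayes
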